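/- Let Σ be a nonzero real symmetric positive-semidefinite N×N matrix, let K be a real symmetric positive-definite T×T matrix with (1/T)·Tr(K) = 1, and let q > 0 and λ > 0. Suppose κ_c > 0 and κ̃_c > 0 satisfy df¹_K(κ̃_c) = q·df¹_Σ(κ_c) and κ_c·κ̃_c·q·df¹_Σ(κ_c) = λ, and suppose κ_u > 0 satisfies κ_u·(1 − q·df¹_Σ(κ_u)) = λ. Then df²_Σ(κ_c) ≤ df²_Σ(κ_u): the presence of correlations decreases (or keeps constant) the second degrees of freedom. -/

import Mathlib

/-!
On the eigenbasis of `Σ`, both degrees of freedom are averages of `σ/(σ+κ)` and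
`σ²/(σ+κ)²` over the spectrum, hence antitone in the ridge `κ`. Concavity of `k ↦ k/(k+κ)`
(Jensen, via its tangent at the mean eigenvalue `1` of `K`) gives
`q·df¹_Σ(κ_c) = df¹_K(κ̃_c) ≤ 1/(1+κ̃_c)`, so `λ = κ_c κ̃_c q df¹_Σ(κ_c) ≤ κ_c (1 - q df¹_Σ(κ_c))`.
Since `κ ↦ κ (1 - q df¹_Σ(κ))` is strictly increasing wherever `q df¹_Σ(κ) < 1`, this forces
`κ_u ≤ κ_c`, and antitonicity of `df²_Σ` concludes.
-/

open Matrix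

/-- First degrees of freedom: `df¹_A(κ) = (1/n)·Tr(A(A + κI)⁻¹)`. -/
noncomputable def df1 {n : ℕ} (A : Matrix (Fin n) (Fin n) ℝ) (κ : ℝ) : ℝ :=
  (1 / (n : ℝ)) * (A * (A + κ • (1 : Matrix (Fin n) (Fin n) ℝ))⁻¹).trace

/-- Second degrees of freedom: `df²_A(κ) = (1/n)·Tr(A²(A + κI)⁻²)`. -/
noncomputable def df2 {n : ℕ} (A : Matrix (Fin n) (Fin n) ℝ) (κ : ℝ) : ℝ :=
  (1 / (n : ℝ)) * (A ^ 2 * ((A + κ • (1 : Matrix (Fin n) (Fin n) ℝ))⁻¹) ^ 2).trace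

open Set

lemma Matrix.continuousOn_spectrum_real {n : Type*} [Fintype n] [DecidableEq n]
    (A : Matrix n n ℝ) (f : ℝ → ℝ) : ContinuousOn f (spectrum ℝ A) :=
  A.finite_spectrum.continuousOn f

namespace Matrix.IsHermitian

variable {n : Type*} [Fintype n] [DecidableEq n] {A : Matrix n n ℝ} (hA : A.IsHermitian)
include hA

lemma trace_cfc (f : ℝ → ℝ) : (cfc f A).trace = ∑ i, f (hA.eigenvalues i) := by
  rw [hA.cfc_eq, IsHermitian.cfc, Unitary.conjStarAlgAut_apply, trace_mul_cycle,
    Unitary.coe_star_mul_self, one_mul, trace_diagonal]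
  rfl

lemma inv_add_smul_one {κ : ℝ} (hκ : ∀ i, hA.eigenvalues i + κ ≠ 0) :
    (A + κ • 1)⁻¹ = cfc (fun x => (x + κ)⁻¹) A := by
  have hA' : IsSelfAdjoint A := hA
  apply inv_eq_right_inv
  rw [← cfc_id' ℝ A, ← Algebra.algebraMap_eq_smul_one,
    ← cfc_add_const κ _ A (A.continuousOn_spectrum_real _), cfc_id' ℝ A,
    ← cfc_mul _ _ A (A.continuousOn_spectrum_real _) (A.continuousOn_spectrum_real _),
    ← cfc_one ℝ A]
  refine cfc_congr fun x hx => ?_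
  rw [hA.spectrum_real_eq_range_eigenvalues] at hx
  obtain ⟨i, rfl⟩ := hx
  exact mul_inv_cancel₀ (hκ i)

lemma trace_mul_inv_add_smul_one {κ : ℝ} (hκ : ∀ i, hA.eigenvalues i + κ ≠ 0) :
    (A * (A + κ • 1)⁻¹).trace = ∑ i, hA.eigenvalues i / (hA.eigenvalues i + κ) := by
  have hA' : IsSelfAdjoint A := hA
  rw [hA.inv_add_smul_one hκ]
  nth_rw 1 [← cfc_id' ℝ A]
  rw [← cfc_mul _ _ _ (A.continuousOn_spectrum_real _) (A.continuousOn_spectrum_real _),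
    hA.trace_cfc]
  rfl

lemma trace_sq_mul_inv_add_smul_one_sq {κ : ℝ} (hκ : ∀ i, hA.eigenvalues i + κ ≠ 0) :
    (A ^ 2 * ((A + κ • 1)⁻¹) ^ 2).trace
      = ∑ i, hA.eigenvalues i ^ 2 / (hA.eigenvalues i + κ) ^ 2 := by
  have hA' : IsSelfAdjoint A := hA
  rw [hA.inv_add_smul_one hκ, ← cfc_pow_id (R := ℝ) A 2,
    ← cfc_pow _ 2 _ (A.continuousOn_spectrum_real _),
    ← cfc_mul _ _ _ (A.continuousOn_spectrum_real _) (A.continuousOn_spectrum_real _),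
    hA.trace_cfc]
  simp only [inv_pow, div_eq_mul_inv]

end Matrix.IsHermitian

namespace Matrix.PosSemidef

variable {n : ℕ} {A : Matrix (Fin n) (Fin n) ℝ}

lemma eigenvalues_add_pos (hA : A.PosSemidef) {κ : ℝ} (hκ : 0 < κ) (i : Fin n) :
    0 < hA.1.eigenvalues i + κ :=
  add_pos_of_nonneg_of_pos (hA.eigenvalues_nonneg i) hκ

lemma df1_eq (hA : A.PosSemidef) {κ : ℝ} (hκ : 0 < κ) :
    df1 A κ = 1 / n * ∑ i, hA.1.eigenvalues i / (hA.1.eigenvalues i + κ) := by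
  rw [df1, hA.1.trace_mul_inv_add_smul_one fun i => (hA.eigenvalues_add_pos hκ i).ne']

lemma df2_eq (hA : A.PosSemidef) {κ : ℝ} (hκ : 0 < κ) :
    df2 A κ = 1 / n * ∑ i, hA.1.eigenvalues i ^ 2 / (hA.1.eigenvalues i + κ) ^ 2 := by
  rw [df2, hA.1.trace_sq_mul_inv_add_smul_one_sq fun i => (hA.eigenvalues_add_pos hκ i).ne']

lemma df1_antitoneOn (hA : A.PosSemidef) : AntitoneOn (df1 A) (Ioi 0) := by
  intro κ hκ κ' hκ' hle
  rw [hA.df1_eq hκ, hA.df1_eq hκ']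
  gcongr with i
  · exact hA.eigenvalues_nonneg i
  · exact hA.eigenvalues_add_pos hκ i

lemma df2_antitoneOn (hA : A.PosSemidef) : AntitoneOn (df2 A) (Ioi 0) := by
  intro κ hκ κ' hκ' hle
  rw [hA.df2_eq hκ, hA.df2_eq hκ']
  gcongr with i
  · exact pow_pos (hA.eigenvalues_add_pos hκ i) 2
  · exact (hA.eigenvalues_add_pos hκ i).le

end Matrix.PosSemidef

lemma div_add_le_tangent_at_one {k κ : ℝ} (hκ : 0 ≤ κ) (hkκ : 0 < k + κ) :
    k / (k + κ) ≤ 1 / (1 + κ) + κ * (k - 1) / (1 + κ) ^ 2 := by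
  have hgap : 1 / (1 + κ) + κ * (k - 1) / (1 + κ) ^ 2 - k / (k + κ)
      = κ * (k - 1) ^ 2 / ((k + κ) * (1 + κ) ^ 2) := by
    field_simp
    ring
  have : 0 ≤ κ * (k - 1) ^ 2 / ((k + κ) * (1 + κ) ^ 2) := by positivity
  linarith

lemma df1_le_one_div_one_add {T : ℕ} {K : Matrix (Fin T) (Fin T) ℝ} (hK : K.PosSemidef)
    (htr : 1 / (T : ℝ) * K.trace = 1) {κ : ℝ} (hκ : 0 < κ) :
    df1 K κ ≤ 1 / (1 + κ) := by
  set k := hK.1.eigenvalues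
  have hT : (T : ℝ) ≠ 0 := by
    rintro hT
    simp [hT] at htr
  have hsum : ∑ i, (k i - 1) = 0 := by
    rw [hK.1.trace_eq_sum_eigenvalues] at htr
    field_simp at htr
    simp [Finset.sum_sub_distrib, ← htr, k]
  rw [hK.df1_eq hκ]
  calc 1 / (T : ℝ) * ∑ i, k i / (k i + κ)
      ≤ 1 / T * ∑ i, (1 / (1 + κ) + κ * (k i - 1) / (1 + κ) ^ 2) := by
        gcongr with i
        exact div_add_le_tangent_at_one hκ.le (hK.eigenvalues_add_pos hκ i)
    _ = 1 / (1 + κ) := by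
        rw [Finset.sum_add_distrib, Finset.sum_const, ← Finset.sum_div, ← Finset.mul_sum, hsum]
        simp only [Finset.card_univ, Fintype.card_fin, nsmul_eq_mul]
        field_simp
        ring

lemma le_of_mul_one_sub_le {f : ℝ → ℝ} (hf : AntitoneOn f (Ioi 0)) {a b : ℝ} (hb : 0 < b)
    (hfb : f b < 1) (h : a * (1 - f a) ≤ b * (1 - f b)) : a ≤ b := by
  by_contra! hba
  have hfab : f a ≤ f b := hf hb (hb.trans hba) hba.le
  nlinarith

theorem stmt5_general {N T : ℕ} (Sg : Matrix (Fin N) (Fin N) ℝ) (hSg : Sg.PosSemidef)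
    (K : Matrix (Fin T) (Fin T) ℝ) (hK : K.PosDef)
    (htr : (1 / (T : ℝ)) * K.trace = 1)
    (q lam κc κtc κu : ℝ) (hq : 0 < q)
    (hκc : 0 < κc) (hκtc : 0 < κtc)
    (h1 : df1 K κtc = q * df1 Sg κc)
    (h2 : κc * κtc * (q * df1 Sg κc) = lam)
    (hκu : 0 < κu) (h3 : κu * (1 - q * df1 Sg κu) = lam) :
    df2 Sg κc ≤ df2 Sg κu := by
  set x := q * df1 Sg κc
  have hx : x * (1 + κtc) ≤ 1 :=
    (le_div_iff₀ (by positivity)).1 (h1 ▸ df1_le_one_div_one_add hK.posSemidef htr hκtc)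
  have hx_lt_one : x < 1 := by nlinarith
  have hlam : lam ≤ κc * (1 - x) := by nlinarith
  have hqdf1 : AntitoneOn (fun κ => q * df1 Sg κ) (Ioi 0) := fun a ha b hb hab =>
    mul_le_mul_of_nonneg_left (hSg.df1_antitoneOn ha hb hab) hq.le
  have hκ : κu ≤ κc := le_of_mul_one_sub_le hqdf1 hκc hx_lt_one (h3.trans_le hlam)
  exact hSg.df2_antitoneOn hκu hκc hκ

/-- the presence of correlations decreases (or keeps constant) the second
degrees of freedom: `df²_Σ(κ_c) ≤ df²_Σ(κ_u)`. -/
theorem stmt5 {N T : ℕ} (Sg : Matrix (Fin N) (Fin N) ℝ) (hSg : Sg.PosSemidef)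
    (hSg0 : Sg ≠ 0)
    (K : Matrix (Fin T) (Fin T) ℝ) (hK : K.PosDef)
    (htr : (1 / (T : ℝ)) * K.trace = 1)
    (q lam κc κtc κu : ℝ) (hq : 0 < q) (hlam : 0 < lam)
    (hκc : 0 < κc) (hκtc : 0 < κtc)
    (h1 : df1 K κtc = q * df1 Sg κc)
    (h2 : κc * κtc * (q * df1 Sg κc) = lam)
    (hκu : 0 < κu) (h3 : κu * (1 - q * df1 Sg κu) = lam) :
    df2 Sg κc ≤ df2 Sg κu :=
  stmt5_general Sg hSg K hK htr q lam κc κtc κu hq hκc hκtc h1 h2 hκu h3
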